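/- For any modal formula A, the contraction rules (cl_A): from Γ, A, A ⇒ Δ infer Γ, A ⇒ Δ, and (cr_A): from Γ ⇒ A, A, Δ infer Γ ⇒ A, Δ, are admissible in Grz_∞: if the premise is provable in Grz_∞ then so is the conclusion. -/

import Mathlib

/-!
Provability in `Grz_∞` is the greatest fixed point of `X ↦ Derivable X`, where `Derivable X`
is generated by the rules of `Grz_∞` with the right premises of `(□)` taken from `X`. An
∞-proof gives a derivation of this kind by well-founded induction on its main fragment (an
infinite branch avoiding right premises of `(□)` would violate the guard condition);
conversely, a post-fixed point unfolds into an ∞-proof by always applying the last rule of a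
derivation of least height.

Inside `Derivable X` the rules `(→L)`, `(→R)` and the left premise of `(□)` are invertible,
and contraction follows by induction on `A`. The principal cases reduce to contraction of the
immediate subformulas via the inversions. On the right, a duplicated formula never reaches a
right premise of `(□)`, whose succedent is a single formula; on the left, a duplicated boxed
formula can, and this is handled coinductively by adding the contracted sequents to the
post-fixed point.
-/

/-- Modal formulas built from ⊥ and propositional variables using → and □. -/
inductive Fml : Type
  | bot : Fml
  | var : ℕ → Fml
  | imp : Fml → Fml → Fml
  | box : Fml → Fml
deriving DecidableEq

/-- A sequent `Γ ⇒ Δ`: a pair of finite multisets of formulas. -/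
abbrev Sequent : Type := Multiset Fml × Multiset Fml

/-- Tags for the inference rules of `Grz_∞ (+ cut)`. -/
inductive RuleTag : Type
  | ax | axBot | impL | impR | refl | box | cut
deriving DecidableEq

/-- Local correctness of a rule application in `Grz_∞` (cut allowed when the
Boolean parameter is `true`): it relates the conclusion sequent, the rule tag
and the (optional) first and second premises.  For the rule `(□)`, the second
premise is its right premise. -/
inductive Rules : Bool → Sequent → RuleTag → Option Sequent → Option Sequent → Prop
  | ax (c : Bool) (Γ Δ : Multiset Fml) (p : ℕ) :
      Rules c (Fml.var p ::ₘ Γ, Fml.var p ::ₘ Δ) RuleTag.ax none none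
  | axBot (c : Bool) (Γ Δ : Multiset Fml) :
      Rules c (Fml.bot ::ₘ Γ, Δ) RuleTag.axBot none none
  | impL (c : Bool) (Γ Δ : Multiset Fml) (A B : Fml) :
      Rules c (Fml.imp A B ::ₘ Γ, Δ) RuleTag.impL
        (some (B ::ₘ Γ, Δ)) (some (Γ, A ::ₘ Δ))
  | impR (c : Bool) (Γ Δ : Multiset Fml) (A B : Fml) :
      Rules c (Γ, Fml.imp A B ::ₘ Δ) RuleTag.impR
        (some (A ::ₘ Γ, B ::ₘ Δ)) none
  | refl (c : Bool) (Γ Δ : Multiset Fml) (B : Fml) :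
      Rules c (Fml.box B ::ₘ Γ, Δ) RuleTag.refl
        (some (B ::ₘ Fml.box B ::ₘ Γ, Δ)) none
  | box (c : Bool) (Γ Φ Δ : Multiset Fml) (A : Fml) :
      Rules c (Γ + Φ.map Fml.box, Fml.box A ::ₘ Δ) RuleTag.box
        (some (Γ + Φ.map Fml.box, A ::ₘ Δ)) (some (Φ.map Fml.box, ({A} : Multiset Fml)))
  | cut (Γ Δ : Multiset Fml) (A : Fml) :
      Rules true (Γ, Δ) RuleTag.cut (some (Γ, A ::ₘ Δ)) (some (A ::ₘ Γ, Δ))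

/-- An ∞-proof in `Grz_∞` (`c = false`) or `Grz_∞ + cut` (`c = true`): a
possibly infinite tree (nodes are adressed by lists of Booleans, `false`
pointing to the first premise and `true` to the second premise) of sequents
together with applied rules, constructed according to the rules, whose leaves
are initial sequents, and in which every infinite branch passes through a
right premise of the rule `(□)` infinitely many times. -/
structure InfProof (c : Bool) : Type where
  node : List Bool → Option (Sequent × RuleTag)
  root_isSome : (node []).isSome
  closed : ∀ (p : List Bool) (i : Bool), node p = none → node (p ++ [i]) = none
  correct : ∀ (p : List Bool) (s : Sequent) (r : RuleTag), node p = some (s, r) →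
    Rules c s r ((node (p ++ [false])).map Prod.fst) ((node (p ++ [true])).map Prod.fst)
  guard : ∀ f : ℕ → Bool, (∀ n : ℕ, (node ((List.range n).map f)).isSome) →
    ∀ N : ℕ, ∃ n : ℕ, N ≤ n ∧ f n = true ∧
      (node ((List.range n).map f)).map Prod.snd = some RuleTag.box

/-- The sequent at the root of an ∞-proof. -/
def rootSeq {c : Bool} (π : InfProof c) : Sequent :=
  ((π.node []).getD (((0 : Multiset Fml), (0 : Multiset Fml)), RuleTag.ax)).1

/-- A sequent is provable in `Grz_∞ (+ cut)` if it has an ∞-proof with that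
sequent at the root. -/
def ProvableInf (c : Bool) (s : Sequent) : Prop := ∃ π : InfProof c, rootSeq π = s

/-- The number of right premises of the rule `(□)` strictly below the node
addressed by `p` in the ∞-proof `π`. -/
def countBR {c : Bool} (π : InfProof c) (p : List Bool) : ℕ :=
  ((List.range p.length).filter fun i =>
    p.getD i false && decide ((π.node (p.take i)).map Prod.snd = some RuleTag.box)).length

/-- `Frag n π τ` means that the `n`-fragments of `π` and `τ` coincide
(`π ∼_n τ`): the trees agree on every node lying strictly before the `n`-th
right premise of `(□)` on its branch. -/
def Frag {c : Bool} (n : ℕ) (π τ : InfProof c) : Prop :=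
  ∀ p : List Bool, countBR π p < n → π.node p = τ.node p

/-- The local pheight `|π|`: the length of the longest branch in the main
(1-)fragment of `π`. -/
noncomputable def pheight {c : Bool} (π : InfProof c) : ℕ :=
  sSup { n : ℕ | ∃ p : List Bool, p.length = n ∧ (π.node p).isSome ∧ countBR π p = 0 }

/-- Membership in `P_n`: the ∞-proof contains no applications of the cut rule
in its `n`-fragment. -/
def CutFreeIn {c : Bool} (n : ℕ) (π : InfProof c) : Prop :=
  ∀ p : List Bool, countBR π p < n → (π.node p).map Prod.snd ≠ some RuleTag.cut

/-- A non-expansive mapping on ∞-proofs. -/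
def NonExp {c : Bool} (u : InfProof c → InfProof c) : Prop :=
  ∀ (n : ℕ) (π π' : InfProof c), Frag n π π' → Frag n (u π) (u π')

/-- An adequate mapping on ∞-proofs: it preserves each `P_n`. -/
def Adequate {c : Bool} (u : InfProof c → InfProof c) : Prop :=
  ∀ (n : ℕ) (π : InfProof c), CutFreeIn n π → CutFreeIn n (u π)

namespace InfProof

variable {c : Bool}

lemma rootSeq_eq_of_node (π : InfProof c) {s : Sequent} {r : RuleTag}
    (h : π.node [] = some (s, r)) : rootSeq π = s := by
  simp [rootSeq, h]

def child (π : InfProof c) (i : Bool) (h : (π.node [i]).isSome) : InfProof c where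
  node p := π.node (i :: p)
  root_isSome := h
  closed p j := π.closed (i :: p) j
  correct p := π.correct (i :: p)
  guard f hf N := by
    let g : ℕ → Bool := fun k => Nat.casesOn k i f
    have hg : ∀ n, (List.range (n + 1)).map g = i :: (List.range n).map f := fun n => by
      simp [g, List.range_succ_eq_map, Function.comp_def]
    have hgsome : ∀ n, (π.node ((List.range n).map g)).isSome := by
      rintro (_ | n)
      · exact π.root_isSome
      · rw [hg]; exact hf n
    obtain ⟨_ | n, hn, hgn, hbox⟩ := π.guard g hgsome (N + 1)
    · omega
    · exact ⟨n, by omega, hgn, by rwa [hg] at hbox⟩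

lemma rootSeq_child (π : InfProof c) {i : Bool} (h : (π.node [i]).isSome) {s : Sequent}
    {r : RuleTag} (hi : π.node [i] = some (s, r)) : rootSeq (π.child i h) = s :=
  rootSeq_eq_of_node _ hi

lemma provableInf_of_node_singleton (π : InfProof c) {i : Bool} {s : Sequent} {r : RuleTag}
    (hi : π.node [i] = some (s, r)) : ProvableInf c s :=
  ⟨π.child i (by simp [hi]), π.rootSeq_child _ hi⟩

lemma node_iterate_child {f : ℕ → InfProof c} {i : ℕ → Bool}
    (hf : ∀ n, ∃ h, f (n + 1) = (f n).child (i n) h) (n : ℕ) (p : List Bool) :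
    (f n).node p = (f 0).node ((List.range n).map i ++ p) := by
  induction n generalizing p with
  | zero => simp
  | succ n ih =>
    obtain ⟨h, hfn⟩ := hf n
    rw [hfn, List.range_succ]
    simp [child, ih]

end InfProof

inductive Derivable (X : Sequent → Prop) : Sequent → Prop
  | ax (Γ Δ : Multiset Fml) (p : ℕ) : Derivable X (.var p ::ₘ Γ, .var p ::ₘ Δ)
  | axBot (Γ Δ : Multiset Fml) : Derivable X (.bot ::ₘ Γ, Δ)
  | impL (Γ Δ : Multiset Fml) (A B : Fml) :
      Derivable X (B ::ₘ Γ, Δ) → Derivable X (Γ, A ::ₘ Δ) →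
        Derivable X (.imp A B ::ₘ Γ, Δ)
  | impR (Γ Δ : Multiset Fml) (A B : Fml) :
      Derivable X (A ::ₘ Γ, B ::ₘ Δ) → Derivable X (Γ, .imp A B ::ₘ Δ)
  | refl (Γ Δ : Multiset Fml) (B : Fml) :
      Derivable X (B ::ₘ .box B ::ₘ Γ, Δ) → Derivable X (.box B ::ₘ Γ, Δ)
  | box (Γ Φ Δ : Multiset Fml) (A : Fml) :
      Derivable X (Γ + Φ.map .box, A ::ₘ Δ) → X (Φ.map .box, {A}) →
        Derivable X (Γ + Φ.map .box, .box A ::ₘ Δ)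

def IsInference (X Y : Sequent → Prop) (s : Sequent) (r : RuleTag) (o₁ o₂ : Option Sequent) :
    Prop :=
  Rules false s r o₁ o₂ ∧ (∀ t ∈ o₁, Y t) ∧
    ∀ t ∈ o₂, if r = .box then X t else Y t

lemma IsInference.mono {X Y Y' : Sequent → Prop} (hY : ∀ t, Y t → Y' t) {s : Sequent}
    {r : RuleTag} {o₁ o₂ : Option Sequent} (h : IsInference X Y s r o₁ o₂) :
    IsInference X Y' s r o₁ o₂ := by
  refine ⟨h.1, fun t ht => hY t (h.2.1 t ht), fun t ht => ?_⟩
  have := h.2.2 t ht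
  split_ifs at this ⊢ <;> simp_all

namespace Derivable

variable {X : Sequent → Prop}

lemma of_isInference {s : Sequent} {r : RuleTag} {o₁ o₂ : Option Sequent}
    (h : IsInference X (Derivable X) s r o₁ o₂) : Derivable X s := by
  obtain ⟨hr, h₁, h₂⟩ := h
  cases hr <;> simp_all [Derivable.ax, Derivable.axBot, Derivable.impL, Derivable.impR,
    Derivable.refl, Derivable.box]

lemma mono {Y : Sequent → Prop} (hXY : ∀ t, X t → Y t) {s : Sequent} (h : Derivable X s) :
    Derivable Y s := by
  induction h with
  | ax => exact .ax ..
  | axBot => exact .axBot ..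
  | impL _ _ _ _ _ _ ih₁ ih₂ => exact .impL _ _ _ _ ih₁ ih₂
  | impR _ _ _ _ _ ih => exact .impR _ _ _ _ ih
  | refl _ _ _ _ ih => exact .refl _ _ _ ih
  | box _ _ _ _ _ hX ih => exact .box _ _ _ _ ih (hXY _ hX)

end Derivable

def IsMainChild (π' π : InfProof false) : Prop :=
  ∃ i h, π' = π.child i h ∧ (i = true → (π.node []).map Prod.snd ≠ some .box)

lemma wellFounded_isMainChild : WellFounded IsMainChild := by
  refine ⟨fun π => by_contra fun hπ => ?_⟩
  obtain ⟨f, -, hf⟩ := not_acc_iff_exists_descending_chain.mp hπ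
  choose i h hfi hbox using hf
  have hnode := InfProof.node_iterate_child (fun n => ⟨h n, hfi n⟩)
  obtain ⟨n, -, hin, hn⟩ := (f 0).guard i
    (fun n => by simpa [hnode] using (f n).root_isSome) 0
  exact hbox n hin (by simpa [hnode] using hn)

theorem derivable_of_provableInf {s : Sequent} (hs : ProvableInf false s) :
    Derivable (ProvableInf false) s := by
  obtain ⟨π, rfl⟩ := hs
  induction π using wellFounded_isMainChild.induction with
  | _ π ih =>
    obtain ⟨⟨s, r⟩, h₀⟩ := Option.isSome_iff_exists.mp π.root_isSome
    rw [π.rootSeq_eq_of_node h₀]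
    have hmain : ∀ i t r', π.node [i] = some (t, r') → (i = true → r ≠ .box) →
        Derivable (ProvableInf false) t := fun i t r' hi hr => by
      rw [← π.rootSeq_child (by simp [hi]) hi]
      exact ih _ ⟨i, _, rfl, by simpa [h₀] using hr⟩
    refine Derivable.of_isInference ⟨π.correct [] s r h₀, ?_, ?_⟩ <;>
      simp only [List.nil_append, Option.mem_def, Option.map_eq_some_iff, Prod.exists,
        exists_and_right, exists_eq_right, forall_exists_index]
    · exact fun t r' hi => hmain false t r' hi (by simp)
    · intro t r' hi
      split_ifs with hr
      · exact π.provableInf_of_node_singleton hi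
      · exact hmain true t r' hi fun _ => hr

def DerivableIn (X : Sequent → Prop) : ℕ → Sequent → Prop
  | 0 => fun _ => False
  | n + 1 => fun s => ∃ r o₁ o₂, IsInference X (DerivableIn X n) s r o₁ o₂

lemma DerivableIn.mono {X : Sequent → Prop} {n m : ℕ} (hnm : n ≤ m) {s : Sequent}
    (h : DerivableIn X n s) : DerivableIn X m s := by
  induction n generalizing m s with
  | zero => exact h.elim
  | succ n ih =>
    obtain ⟨m, rfl⟩ := Nat.exists_eq_add_of_le' (by omega : 1 ≤ m)
    obtain ⟨r, o₁, o₂, hi⟩ := h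
    exact ⟨r, o₁, o₂, hi.mono fun t => ih (by omega)⟩

lemma Derivable.exists_derivableIn {X : Sequent → Prop} {s : Sequent} (h : Derivable X s) :
    ∃ n, DerivableIn X n s := by
  induction h with
  | ax Γ Δ p => exact ⟨1, _, _, _, Rules.ax false Γ Δ p, by simp, by simp⟩
  | axBot Γ Δ => exact ⟨1, _, _, _, Rules.axBot false Γ Δ, by simp, by simp⟩
  | impL Γ Δ A B _ _ ih₁ ih₂ =>
    obtain ⟨⟨n₁, h₁⟩, ⟨n₂, h₂⟩⟩ := And.intro ih₁ ih₂
    exact ⟨max n₁ n₂ + 1, _, _, _, Rules.impL false Γ Δ A B,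
      by simpa using h₁.mono (le_max_left _ _), by simpa using h₂.mono (le_max_right _ _)⟩
  | impR Γ Δ A B _ ih =>
    obtain ⟨n, h⟩ := ih
    exact ⟨n + 1, _, _, _, Rules.impR false Γ Δ A B, by simpa using h, by simp⟩
  | refl Γ Δ B _ ih =>
    obtain ⟨n, h⟩ := ih
    exact ⟨n + 1, _, _, _, Rules.refl false Γ Δ B, by simpa using h, by simp⟩
  | box Γ Φ Δ A _ hX ih =>
    obtain ⟨n, h⟩ := ih
    exact ⟨n + 1, _, _, _, Rules.box false Γ Φ Δ A, by simpa using h, by simpa using hX⟩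

section Canonical

variable (X : Sequent → Prop)

/-- The least height of a derivation of `s` (`0` if there is none). -/
noncomputable def level (s : Sequent) : ℕ := sInf {n | DerivableIn X n s}

open Classical in
/-- The last inference of a derivation of `s` of least height. -/
noncomputable def bestInference (s : Sequent) : RuleTag × Option Sequent × Option Sequent :=
  if h : ∃ a : RuleTag × Option Sequent × Option Sequent,
      IsInference X (DerivableIn X (level X s - 1)) s a.1 a.2.1 a.2.2 then h.choose
  else (.ax, none, none)

def premise (a : RuleTag × Option Sequent × Option Sequent) (i : Bool) : Option Sequent :=
  cond i a.2.2 a.2.1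

noncomputable def canonicalSeq (s : Sequent) (p : List Bool) : Option Sequent :=
  p.foldl (fun o i => o.bind fun t => premise (bestInference X t) i) (some s)

variable {X}

lemma bestInference_spec {s : Sequent} (hs : ∃ n, DerivableIn X n s) :
    1 ≤ level X s ∧ IsInference X (DerivableIn X (level X s - 1)) s (bestInference X s).1
      (bestInference X s).2.1 (bestInference X s).2.2 := by
  have hmem : DerivableIn X (level X s) s := Nat.sInf_mem hs
  obtain ⟨m, hm⟩ : ∃ m, level X s = m + 1 := by
    cases h : level X s with
    | zero => rw [h] at hmem; exact hmem.elim
    | succ m => exact ⟨m, rfl⟩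
  rw [hm] at hmem
  obtain ⟨r, o₁, o₂, hi⟩ := hmem
  have hex : ∃ a : RuleTag × Option Sequent × Option Sequent,
      IsInference X (DerivableIn X (level X s - 1)) s a.1 a.2.1 a.2.2 :=
    ⟨(r, o₁, o₂), by simpa [hm] using hi⟩
  refine ⟨by omega, ?_⟩
  rw [bestInference, dif_pos hex]
  exact hex.choose_spec

lemma level_lt {s t : Sequent} (hs : 1 ≤ level X s) (ht : DerivableIn X (level X s - 1) t) :
    level X t < level X s :=
  lt_of_le_of_lt (Nat.sInf_le ht) (by omega)

lemma canonicalSeq_append (s : Sequent) (p : List Bool) (i : Bool) :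
    canonicalSeq X s (p ++ [i]) =
      (canonicalSeq X s p).bind fun t => premise (bestInference X t) i := by
  simp [canonicalSeq]

lemma canonicalSeq_derivableIn (hX : ∀ t, X t → ∃ n, DerivableIn X n t) {s : Sequent}
    (hs : ∃ n, DerivableIn X n s) {p : List Bool} {t : Sequent}
    (hp : canonicalSeq X s p = some t) : ∃ n, DerivableIn X n t := by
  induction p using List.reverseRecOn generalizing t with
  | nil => cases hp; exact hs
  | append_singleton p i ih =>
    rw [canonicalSeq_append, Option.bind_eq_some_iff] at hp
    obtain ⟨u, hu, ht⟩ := hp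
    obtain ⟨-, -, h₁, h₂⟩ := bestInference_spec (ih hu)
    cases i with
    | false => exact ⟨_, h₁ t ht⟩
    | true =>
      have := h₂ t ht
      split_ifs at this
      · exact hX t this
      · exact ⟨_, this⟩

lemma level_lt_of_canonicalSeq_append (hX : ∀ t, X t → ∃ n, DerivableIn X n t) {s : Sequent}
    (hs : ∃ n, DerivableIn X n s) {p : List Bool} {i : Bool} {t u : Sequent}
    (ht : canonicalSeq X s p = some t) (hu : canonicalSeq X s (p ++ [i]) = some u)
    (hi : i = true → (bestInference X t).1 ≠ .box) : level X u < level X t := by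
  rw [canonicalSeq_append, ht, Option.bind_some] at hu
  obtain ⟨hlev, -, h₁, h₂⟩ := bestInference_spec (canonicalSeq_derivableIn hX hs ht)
  cases i with
  | false => exact level_lt hlev (h₁ u hu)
  | true =>
    have := h₂ u hu
    rw [if_neg (hi rfl)] at this
    exact level_lt hlev this

noncomputable def canonicalProof (hX : ∀ t, X t → ∃ n, DerivableIn X n t) (s : Sequent)
    (hs : ∃ n, DerivableIn X n s) : InfProof false where
  node p := (canonicalSeq X s p).map fun t => (t, (bestInference X t).1)
  root_isSome := by simp [canonicalSeq]
  closed p i h := by simp_all [canonicalSeq_append]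
  correct p t r h := by
    simp only [Option.map_eq_some_iff, Prod.mk.injEq] at h
    obtain ⟨t, ht, rfl, rfl⟩ := h
    simp only [Option.map_map, Function.comp_def, Option.map_id', canonicalSeq_append, ht,
      Option.bind_some, premise, cond_true, cond_false]
    exact (bestInference_spec (canonicalSeq_derivableIn hX hs ht)).2.1
  guard f hf N := by
    by_contra hcon
    simp only [not_exists, not_and] at hcon
    choose t ht using fun n => Option.isSome_iff_exists.mp (by simpa using hf n)
    have hdec : ∀ n, N ≤ n → level X (t (n + 1)) < level X (t n) := fun n hn =>
      level_lt_of_canonicalSeq_append hX hs (ht n)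
        (by simpa [List.range_succ] using ht (n + 1)) fun hfn => by
          simpa [ht n] using hcon n hn hfn
    have hdesc : ∀ k, level X (t (N + k)) + k ≤ level X (t N) := by
      intro k
      induction k with
      | zero => simp
      | succ k ih =>
        have := hdec (N + k) (by omega)
        show level X (t (N + k + 1)) + (k + 1) ≤ _
        omega
    have := hdesc (level X (t N) + 1)
    omega

theorem Derivable.provableInf (hX : ∀ t, X t → Derivable X t) {s : Sequent}
    (hs : Derivable X s) : ProvableInf false s :=
  ⟨canonicalProof (fun t ht => (hX t ht).exists_derivableIn) s hs.exists_derivableIn,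
    InfProof.rootSeq_eq_of_node _ (r := (bestInference X s).1)
      (by simp [canonicalProof, canonicalSeq])⟩

end Canonical

theorem provableInf_iff_derivable {s : Sequent} :
    ProvableInf false s ↔ Derivable (ProvableInf false) s :=
  ⟨derivable_of_provableInf, Derivable.provableInf fun _ => derivable_of_provableInf⟩

namespace Multiset

variable {α : Type*} [DecidableEq α] {a b x : α} {s : Multiset α}

lemma mem_of_two_le_count (h : 2 ≤ count a s) : a ∈ s :=
  one_le_count_iff_mem.mp (by omega)

lemma mem_erase_of_two_le_count (h : 2 ≤ count a s) (hx : x ∈ s) : x ∈ s.erase a := by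
  rcases eq_or_ne x a with rfl | hne
  · rw [← one_le_count_iff_mem, count_erase_self]
    omega
  · exact (mem_erase_of_ne hne).mpr hx

lemma two_le_count_of_cons_ne (h : 2 ≤ count a (b ::ₘ s)) (hne : b ≠ a) :
    2 ≤ count a s := by
  rwa [count_cons_of_ne hne.symm] at h

end Multiset

def ContractionLeftAdmissible (A : Fml) : Prop :=
  ∀ Γ Δ, ProvableInf false (A ::ₘ A ::ₘ Γ, Δ) → ProvableInf false (A ::ₘ Γ, Δ)

def ContractionRightAdmissible (A : Fml) : Prop :=
  ∀ Γ Δ, ProvableInf false (Γ, A ::ₘ A ::ₘ Δ) → ProvableInf false (Γ, A ::ₘ Δ)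

lemma ContractionLeftAdmissible.derivable {A : Fml} (hA : ContractionLeftAdmissible A)
    {Γ Δ : Multiset Fml} (h : Derivable (ProvableInf false) (A ::ₘ A ::ₘ Γ, Δ)) :
    Derivable (ProvableInf false) (A ::ₘ Γ, Δ) :=
  provableInf_iff_derivable.mp (hA Γ Δ (provableInf_iff_derivable.mpr h))

lemma ContractionRightAdmissible.derivable {A : Fml} (hA : ContractionRightAdmissible A)
    {Γ Δ : Multiset Fml} (h : Derivable (ProvableInf false) (Γ, A ::ₘ A ::ₘ Δ)) :
    Derivable (ProvableInf false) (Γ, A ::ₘ Δ) :=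
  provableInf_iff_derivable.mp (hA Γ Δ (provableInf_iff_derivable.mpr h))

open Multiset

namespace Derivable

variable {X : Sequent → Prop}

lemma ax_of_mem {Γ Δ : Multiset Fml} {p : ℕ} (hΓ : .var p ∈ Γ) (hΔ : .var p ∈ Δ) :
    Derivable X (Γ, Δ) := by
  rw [← cons_erase hΓ, ← cons_erase hΔ]
  exact .ax ..

lemma axBot_of_mem {Γ Δ : Multiset Fml} (hΓ : .bot ∈ Γ) : Derivable X (Γ, Δ) := by
  rw [← cons_erase hΓ]
  exact .axBot ..

theorem inv_impL_of_mem {A B : Fml} {s : Sequent} (h : Derivable X s) (hs : .imp A B ∈ s.1) :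
    Derivable X (B ::ₘ s.1.erase (.imp A B), s.2) ∧
      Derivable X (s.1.erase (.imp A B), A ::ₘ s.2) := by
  set F := Fml.imp A B
  induction h with
  | ax Γ Δ p =>
    exact ⟨ax_of_mem (p := p) (by simp [F]) (by simp),
      ax_of_mem (p := p) (by simp [F]) (by simp)⟩
  | axBot Γ Δ => exact ⟨axBot_of_mem (by simp [F]), axBot_of_mem (by simp [F])⟩
  | impL Γ Δ a b _ _ ih₁ ih₂ =>
    by_cases heq : Fml.imp a b = F
    · obtain ⟨rfl, rfl⟩ := Fml.imp.inj heq
      simp_all [F]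
    · have hΓ : F ∈ Γ := by simpa [Ne.symm heq] using hs
      obtain ⟨h₁, h₂⟩ := ih₁ (mem_cons_of_mem hΓ)
      obtain ⟨h₃, h₄⟩ := ih₂ hΓ
      simp only [erase_cons_tail_of_mem hΓ] at h₁ h₂ ⊢
      exact ⟨cons_swap B _ _ ▸ .impL _ _ a b (cons_swap B b _ ▸ h₁) h₃,
        .impL _ _ a b h₂ (cons_swap a A _ ▸ h₄)⟩
  | impR Γ Δ a b _ ih =>
    obtain ⟨h₁, h₂⟩ := ih (mem_cons_of_mem hs)
    simp only [erase_cons_tail_of_mem hs] at h₁ h₂ ⊢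
    exact ⟨.impR _ _ a b (cons_swap a B _ ▸ h₁),
      cons_swap A _ _ ▸ .impR _ _ a b (cons_swap b A _ ▸ h₂)⟩
  | refl Γ Δ b _ ih =>
    have hΓ : F ∈ Γ := by simpa [F] using hs
    obtain ⟨h₁, h₂⟩ := ih (by simp [hΓ])
    simp only [erase_cons_tail_of_mem hΓ, erase_cons_tail_of_mem (mem_cons_of_mem hΓ)]
      at h₁ h₂ ⊢
    refine ⟨cons_swap B _ _ ▸ .refl _ _ b ?_, .refl _ _ b h₂⟩
    rwa [cons_swap _ B, cons_swap b B]
  | box Γ Φ Δ a _ hX ih =>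
    have hΓ : F ∈ Γ := by simpa [F] using hs
    obtain ⟨h₁, h₂⟩ := ih hs
    simp only [erase_add_left_pos _ hΓ] at h₁ h₂ ⊢
    rw [← cons_add] at h₁ ⊢
    exact ⟨.box _ _ _ a h₁ hX, cons_swap A _ _ ▸ .box _ _ _ a (cons_swap a A _ ▸ h₂) hX⟩

theorem inv_impR_of_mem {A B : Fml} {s : Sequent} (h : Derivable X s) (hs : .imp A B ∈ s.2) :
    Derivable X (A ::ₘ s.1, B ::ₘ s.2.erase (.imp A B)) := by
  set F := Fml.imp A B
  induction h with
  | ax Γ Δ p => exact ax_of_mem (p := p) (by simp) (by simp [F])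
  | axBot Γ Δ => exact axBot_of_mem (by simp)
  | impL Γ Δ a b _ _ ih₁ ih₂ =>
    have h₁ := ih₁ hs
    have h₂ := ih₂ (mem_cons_of_mem hs)
    simp only [erase_cons_tail_of_mem hs] at h₂
    exact cons_swap A _ _ ▸ .impL _ _ a b (cons_swap A b _ ▸ h₁) (cons_swap B a _ ▸ h₂)
  | impR Γ Δ a b h₀ ih =>
    by_cases heq : Fml.imp a b = F
    · obtain ⟨rfl, rfl⟩ := Fml.imp.inj heq
      simpa [F] using h₀
    · have hΔ : F ∈ Δ := by simpa [Ne.symm heq] using hs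
      have h₁ := ih (mem_cons_of_mem hΔ)
      simp only [erase_cons_tail_of_mem hΔ] at h₁ ⊢
      refine cons_swap B _ _ ▸ .impR _ _ a b ?_
      rwa [cons_swap a A, cons_swap b B]
  | refl Γ Δ b _ ih =>
    have h₁ := ih hs
    refine cons_swap A _ _ ▸ .refl _ _ b ?_
    rwa [cons_swap _ A, cons_swap b A]
  | box Γ Φ Δ a _ hX ih =>
    have hΔ : F ∈ Δ := by simpa [F] using hs
    have h₁ := ih (mem_cons_of_mem hΔ)
    simp only [erase_cons_tail_of_mem hΔ] at h₁ ⊢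
    rw [← cons_add] at h₁ ⊢
    exact cons_swap B _ _ ▸ .box _ _ _ a (cons_swap a B _ ▸ h₁) hX

theorem inv_boxR_of_mem {A : Fml} {s : Sequent} (h : Derivable X s) (hs : .box A ∈ s.2) :
    Derivable X (s.1, A ::ₘ s.2.erase (.box A)) := by
  set F := Fml.box A
  induction h with
  | ax Γ Δ p => exact ax_of_mem (p := p) (by simp) (by simp [F])
  | axBot Γ Δ => exact axBot_of_mem (by simp)
  | impL Γ Δ a b _ _ ih₁ ih₂ =>
    have h₂ := ih₂ (mem_cons_of_mem hs)
    simp only [erase_cons_tail_of_mem hs] at h₂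
    exact .impL _ _ a b (ih₁ hs) (cons_swap A a _ ▸ h₂)
  | impR Γ Δ a b _ ih =>
    have hΔ : F ∈ Δ := by simpa [F] using hs
    have h₁ := ih (mem_cons_of_mem hΔ)
    simp only [erase_cons_tail_of_mem hΔ] at h₁ ⊢
    exact cons_swap A _ _ ▸ .impR _ _ a b (cons_swap A b _ ▸ h₁)
  | refl Γ Δ b _ ih => exact .refl _ _ b (ih hs)
  | box Γ Φ Δ a h₀ hX ih =>
    by_cases heq : Fml.box a = F
    · obtain rfl := Fml.box.inj heq
      simpa [F] using h₀
    · have hΔ : F ∈ Δ := by simpa [Ne.symm heq] using hs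
      have h₁ := ih (mem_cons_of_mem hΔ)
      simp only [erase_cons_tail_of_mem hΔ] at h₁ ⊢
      exact cons_swap A _ _ ▸ .box _ _ _ a (cons_swap a A _ ▸ h₁) hX

theorem contractR_of_count {A : Fml}
    (hImp : ∀ a b, A = .imp a b → ContractionLeftAdmissible a ∧ ContractionRightAdmissible b)
    (hBox : ∀ a, A = .box a → ContractionRightAdmissible a) {s : Sequent}
    (h : Derivable (ProvableInf false) s) (hs : 2 ≤ count A s.2) :
    Derivable (ProvableInf false) (s.1, s.2.erase A) := by
  induction h with
  | ax Γ Δ p => exact ax_of_mem (p := p) (by simp) (mem_erase_of_two_le_count hs (by simp))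
  | axBot Γ Δ => exact axBot_of_mem (by simp)
  | impL Γ Δ a b _ _ ih₁ ih₂ =>
    have h₂ := ih₂ (hs.trans (count_le_count_cons _ _ _))
    rw [erase_cons_tail_of_mem (mem_of_two_le_count hs)] at h₂
    exact .impL _ _ a b (ih₁ hs) h₂
  | impR Γ Δ a b h₀ ih =>
    by_cases heq : Fml.imp a b = A
    · subst heq
      obtain ⟨hLa, hRb⟩ := hImp a b rfl
      have hΔ : Fml.imp a b ∈ Δ := one_le_count_iff_mem.mp (by simpa using hs)
      have h₁ := inv_impR_of_mem h₀ (mem_cons_of_mem hΔ)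
      rw [erase_cons_tail_of_mem hΔ] at h₁
      dsimp only
      rw [erase_cons_head, ← cons_erase hΔ]
      exact .impR _ _ a b (hRb.derivable (hLa.derivable h₁))
    · have hΔ := two_le_count_of_cons_ne hs heq
      have h₁ := ih (hΔ.trans (count_le_count_cons _ _ _))
      dsimp only at h₁ ⊢
      rw [erase_cons_tail_of_mem (mem_of_two_le_count hΔ)] at h₁ ⊢
      exact .impR _ _ a b h₁
  | refl Γ Δ b _ ih => exact .refl _ _ b (ih hs)
  | box Γ Φ Δ a h₀ hX ih =>
    by_cases heq : Fml.box a = A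
    · subst heq
      have hΔ : Fml.box a ∈ Δ := one_le_count_iff_mem.mp (by simpa using hs)
      have h₁ := inv_boxR_of_mem h₀ (mem_cons_of_mem hΔ)
      rw [erase_cons_tail_of_mem hΔ] at h₁
      dsimp only
      rw [erase_cons_head, ← cons_erase hΔ]
      exact .box _ _ _ a ((hBox a rfl).derivable h₁) hX
    · have hΔ := two_le_count_of_cons_ne hs heq
      have h₁ := ih (hΔ.trans (count_le_count_cons _ _ _))
      dsimp only at h₁ ⊢
      rw [erase_cons_tail_of_mem (mem_of_two_le_count hΔ)] at h₁ ⊢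
      exact .box _ _ _ a h₁ hX

theorem contractL_of_count {A : Fml}
    (hImp : ∀ a b, A = .imp a b → ContractionLeftAdmissible b ∧ ContractionRightAdmissible a)
    {Y : Sequent → Prop} (hPY : ∀ t, ProvableInf false t → Y t)
    (hY : ∀ t, ProvableInf false t → 2 ≤ count A t.1 → Y (t.1.erase A, t.2)) {s : Sequent}
    (h : Derivable (ProvableInf false) s) (hs : 2 ≤ count A s.1) :
    Derivable Y (s.1.erase A, s.2) := by
  induction h with
  | ax Γ Δ p => exact ax_of_mem (p := p) (mem_erase_of_two_le_count hs (by simp)) (by simp)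
  | axBot Γ Δ => exact axBot_of_mem (mem_erase_of_two_le_count hs (by simp))
  | impL Γ Δ a b h₁ h₂ ih₁ ih₂ =>
    by_cases heq : Fml.imp a b = A
    · subst heq
      obtain ⟨hLb, hRa⟩ := hImp a b rfl
      have hΓ : Fml.imp a b ∈ Γ := one_le_count_iff_mem.mp (by simpa using hs)
      have h₁' := (inv_impL_of_mem h₁ (mem_cons_of_mem hΓ)).1
      have h₂' := (inv_impL_of_mem h₂ hΓ).2
      rw [erase_cons_tail_of_mem hΓ] at h₁'
      dsimp only
      rw [erase_cons_head, ← cons_erase hΓ]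
      exact .impL _ _ a b ((hLb.derivable h₁').mono hPY) ((hRa.derivable h₂').mono hPY)
    · have hΓ := two_le_count_of_cons_ne hs heq
      have h₁' := ih₁ (hΓ.trans (count_le_count_cons _ _ _))
      dsimp only at h₁' ih₂ ⊢
      rw [erase_cons_tail_of_mem (mem_of_two_le_count hΓ)] at h₁' ⊢
      exact .impL _ _ a b h₁' (ih₂ hΓ)
  | impR Γ Δ a b _ ih =>
    have h₁ := ih (hs.trans (count_le_count_cons _ _ _))
    dsimp only at h₁ ⊢
    rw [erase_cons_tail_of_mem (mem_of_two_le_count hs)] at h₁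
    exact .impR _ _ a b h₁
  | refl Γ Δ b _ ih =>
    by_cases heq : Fml.box b = A
    · subst heq
      have hΓ : Fml.box b ∈ Γ := one_le_count_iff_mem.mp (by simpa using hs)
      have h₁ := ih (by simp [count_cons] at hs ⊢; omega)
      dsimp only at h₁ ⊢
      rw [erase_cons_tail_of_mem (mem_cons_self _ _), erase_cons_head] at h₁
      rw [erase_cons_head]
      rw [← cons_erase hΓ] at h₁ ⊢
      exact .refl _ _ b h₁
    · have hΓ := two_le_count_of_cons_ne hs heq
      have h₁ := ih (by simp [count_cons] at hs ⊢; omega)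
      dsimp only at h₁ ⊢
      rw [erase_cons_tail_of_mem (mem_of_two_le_count hΓ)]
      rw [erase_cons_tail_of_mem (by simp [mem_of_two_le_count hΓ]),
        erase_cons_tail_of_mem (mem_of_two_le_count hΓ)] at h₁
      exact .refl _ _ b h₁
  | box Γ Φ Δ a _ hX ih =>
    have h₁ := ih hs
    dsimp only at h₁ hs ⊢
    by_cases hΓ : A ∈ Γ
    · rw [erase_add_left_pos _ hΓ] at h₁ ⊢
      exact .box _ _ _ a h₁ (hPY _ hX)
    · -- both copies of `A` pass to the right premise, whose contraction lies in `Y`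
      have hΦ : 2 ≤ count A (Φ.map Fml.box) := by
        rwa [count_add, count_eq_zero_of_notMem hΓ, zero_add] at hs
      obtain ⟨B, hB, rfl⟩ := mem_map.mp (mem_of_two_le_count hΦ)
      have herase : (Φ.map Fml.box).erase (.box B) = (Φ.erase B).map Fml.box :=
        (map_erase _ (fun _ _ => Fml.box.inj) _ _).symm
      rw [erase_add_right_pos _ (mem_of_two_le_count hΦ), herase] at h₁ ⊢
      exact .box _ _ _ a h₁ (herase ▸ hY _ hX hΦ)

end Derivable

theorem contractionRightAdmissible {A : Fml}
    (hImp : ∀ a b, A = .imp a b → ContractionLeftAdmissible a ∧ ContractionRightAdmissible b)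
    (hBox : ∀ a, A = .box a → ContractionRightAdmissible a) : ContractionRightAdmissible A :=
  fun Γ Δ h => provableInf_iff_derivable.mpr <| by
    simpa using (derivable_of_provableInf h).contractR_of_count hImp hBox (by simp)

theorem contractionLeftAdmissible {A : Fml}
    (hImp : ∀ a b, A = .imp a b →
      ContractionLeftAdmissible b ∧ ContractionRightAdmissible a) :
    ContractionLeftAdmissible A := by
  intro Γ Δ h
  let Y : Sequent → Prop := fun s =>
    ProvableInf false s ∨
      ∃ t, ProvableInf false t ∧ 2 ≤ count A t.1 ∧ s = (t.1.erase A, t.2)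
  have hPY : ∀ t, ProvableInf false t → Y t := fun t ht => .inl ht
  have hY : ∀ s, Y s → Derivable Y s := by
    rintro s (hs | ⟨t, ht, hcount, rfl⟩)
    · exact (derivable_of_provableInf hs).mono hPY
    · exact (derivable_of_provableInf ht).contractL_of_count hImp hPY
        (fun t ht hcount => .inr ⟨t, ht, hcount, rfl⟩) hcount
  simpa using Derivable.provableInf hY (hY _ (.inr ⟨_, h, by simp, rfl⟩))

theorem contractionAdmissible_left_and_right (A : Fml) :
    ContractionLeftAdmissible A ∧ ContractionRightAdmissible A := by
  induction A with
  | bot | var =>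
    exact ⟨contractionLeftAdmissible (by simp), contractionRightAdmissible (by simp) (by simp)⟩
  | imp a b iha ihb =>
    refine ⟨contractionLeftAdmissible ?_, contractionRightAdmissible ?_ (by simp)⟩ <;>
      rintro _ _ ⟨⟩
    · exact ⟨ihb.1, iha.2⟩
    · exact ⟨iha.1, ihb.2⟩
  | box a iha =>
    refine ⟨contractionLeftAdmissible (by simp), contractionRightAdmissible (by simp) ?_⟩
    rintro _ ⟨⟩
    exact iha.2

/-- For any formula `A`, the contraction rules `cl_A` and `cr_A` are
admissible in `Grz_∞`. -/
theorem contraction_admissible (A : Fml) (Γ Δ : Multiset Fml) :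
    (ProvableInf false (A ::ₘ A ::ₘ Γ, Δ) → ProvableInf false (A ::ₘ Γ, Δ)) ∧
    (ProvableInf false (Γ, A ::ₘ A ::ₘ Δ) → ProvableInf false (Γ, A ::ₘ Δ)) :=
  ⟨(contractionAdmissible_left_and_right A).1 Γ Δ,
    (contractionAdmissible_left_and_right A).2 Γ Δ⟩
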